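/- Let n ≥ 2, m ≥ 1, and let p : Fin n → ℝ satisfy 1/2 ≤ p i ≤ 1 for all i and be sorted in decreasing order (i ≤ j → p i ≥ p j). Define D(s) = (∑ i, s i * p i) − max_i (s i * p i) on the set A = {s : Fin n → ℕ | ∑ i, s i = m} of deterministic assignments. Suppose s* maximizes D over A and s* i > 0 for some index i > 0 while s* (i−1) = 0. Then there exists s' maximizing D over A with s' (i−1) > 0. -/

import Mathlib

/-!
Moving all tasks of worker `i` to the idle, at least as proficient worker `j` raises the total
expected utility by `c = s i * (p j - p i) ≥ 0`, and raises every single load `s k * p k` by at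
most `c` up to relabelling, so the attacked maximum grows by at most `c` as well. Hence the
defender's utility does not drop, and the moved assignment is still optimal.
-/

open Finset

theorem Real.iSup_le_iSup_add_of_forall_exists {ι : Type*} [Finite ι] [Nonempty ι]
    {f g : ι → ℝ} {c : ℝ} (h : ∀ k, ∃ l, g k ≤ f l + c) :
    ⨆ k, g k ≤ (⨆ k, f k) + c :=
  ciSup_le fun k =>
    let ⟨l, hl⟩ := h k
    hl.trans (add_le_add_left (le_ciSup (Set.finite_range f).bddAbove l) c)

section Swap

variable {ι : Type*} [DecidableEq ι] {x : ι → ℝ} (p : ι → ℝ) {i j : ι}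

theorem sum_comp_swap_mul_of_eq_zero [Fintype ι] (hj : x j = 0) :
    ∑ k, x (Equiv.swap i j k) * p k = ∑ k, x k * p k + x i * (p j - p i) := by
  have hdiff : ∑ k, x k * (p (Equiv.swap i j k) - p k) = x i * (p j - p i) := by
    rw [Finset.sum_eq_single i]
    · simp
    · intro k _ hki
      rcases eq_or_ne k j with rfl | hkj
      · simp [hj]
      · simp [Equiv.swap_apply_of_ne_of_ne hki hkj]
    · simp
  calc ∑ k, x (Equiv.swap i j k) * p k = ∑ k, x k * p (Equiv.swap i j k) := by
        rw [← Equiv.sum_comp (Equiv.swap i j) (fun k => x k * p (Equiv.swap i j k))]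
        simp only [Equiv.swap_apply_self]
    _ = ∑ k, x k * p k + ∑ k, x k * (p (Equiv.swap i j k) - p k) := by
        simp only [mul_sub, sum_sub_distrib, add_sub_cancel]
    _ = ∑ k, x k * p k + x i * (p j - p i) := by rw [hdiff]

theorem comp_swap_mul_le_add (hx : 0 ≤ x i) (hp : p i ≤ p j) (hj : x j = 0) (k : ι) :
    x (Equiv.swap i j k) * p k ≤
      x (Equiv.swap i j k) * p (Equiv.swap i j k) + x i * (p j - p i) := by
  have hc : 0 ≤ x i * (p j - p i) := mul_nonneg hx (sub_nonneg.mpr hp)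
  rcases eq_or_ne k i with rfl | hki
  · simpa [hj] using hc
  rcases eq_or_ne k j with rfl | hkj
  · simp only [Equiv.swap_apply_right]
    linarith
  · simpa [Equiv.swap_apply_of_ne_of_ne hki hkj] using hc

end Swap

noncomputable def defenderUtility {ι : Type*} [Fintype ι] (p : ι → ℝ) (s : ι → ℕ) : ℝ :=
  (∑ k, (s k : ℝ) * p k) - ⨆ k, (s k : ℝ) * p k

theorem defenderUtility_le_comp_swap {ι : Type*} [Fintype ι] [DecidableEq ι] [Nonempty ι]
    (p : ι → ℝ) {s : ι → ℕ} {i j : ι} (hp : p i ≤ p j) (hj : s j = 0) :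
    defenderUtility p s ≤ defenderUtility p (s ∘ Equiv.swap i j) := by
  have hj' : (s j : ℝ) = 0 := by exact_mod_cast hj
  have hsum := sum_comp_swap_mul_of_eq_zero (x := fun k => (s k : ℝ)) p (i := i) hj'
  have hsup : ⨆ k, (s (Equiv.swap i j k) : ℝ) * p k
      ≤ (⨆ k, (s k : ℝ) * p k) + s i * (p j - p i) :=
    Real.iSup_le_iSup_add_of_forall_exists fun k =>
      ⟨Equiv.swap i j k,
        comp_swap_mul_le_add (x := fun k => (s k : ℝ)) p (Nat.cast_nonneg _) hp hj' k⟩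
  simp only [defenderUtility, Function.comp_apply] at hsum ⊢
  linarith

theorem stmt_6_general (n m : ℕ)
    (p : Fin n → ℝ)
    (hsort : ∀ i j : Fin n, i ≤ j → p j ≤ p i)
    (D : (Fin n → ℕ) → ℝ)
    (hD : ∀ s : Fin n → ℕ, D s = (∑ i, (s i : ℝ) * p i) - ⨆ i, (s i : ℝ) * p i)
    (sstar : Fin n → ℕ) (hsum : ∑ i, sstar i = m)
    (hopt : ∀ s : Fin n → ℕ, (∑ i, s i = m) → D s ≤ D sstar)
    (i j : Fin n) (hij : (j : ℕ) + 1 = (i : ℕ))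
    (hi : 0 < sstar i) (hj : sstar j = 0) :
    ∃ s' : Fin n → ℕ, (∑ k, s' k = m) ∧
      (∀ s : Fin n → ℕ, (∑ k, s k = m) → D s ≤ D s') ∧
      0 < s' j := by
  obtain rfl : D = defenderUtility p := funext hD
  have : Nonempty (Fin n) := ⟨i⟩
  have hpij : p i ≤ p j := hsort j i (Fin.le_def.mpr (by omega))
  refine ⟨sstar ∘ Equiv.swap i j, ?_, ?_, ?_⟩
  · rw [← hsum]
    exact Equiv.sum_comp (Equiv.swap i j) sstar
  · exact fun s hs => (hopt s hs).trans (defenderUtility_le_comp_swap p hpij hj)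
  · simpa using hi

/-- Proposition 6. If an optimal deterministic assignment gives tasks to
worker `i > 0` but none to worker `i - 1`, then there is an optimal deterministic
assignment giving at least one task to worker `i - 1`. -/
theorem stmt_6 (n m : ℕ) (hn : 2 ≤ n) (hm : 1 ≤ m)
    (p : Fin n → ℝ) (hp : ∀ i, 1 / 2 ≤ p i ∧ p i ≤ 1)
    (hsort : ∀ i j : Fin n, i ≤ j → p j ≤ p i)
    (D : (Fin n → ℕ) → ℝ)
    (hD : ∀ s : Fin n → ℕ, D s = (∑ i, (s i : ℝ) * p i) - ⨆ i, (s i : ℝ) * p i)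
    (sstar : Fin n → ℕ) (hsum : ∑ i, sstar i = m)
    (hopt : ∀ s : Fin n → ℕ, (∑ i, s i = m) → D s ≤ D sstar)
    (i j : Fin n) (hij : (j : ℕ) + 1 = (i : ℕ))
    (hi : 0 < sstar i) (hj : sstar j = 0) :
    ∃ s' : Fin n → ℕ, (∑ k, s' k = m) ∧
      (∀ s : Fin n → ℕ, (∑ k, s k = m) → D s ≤ D s') ∧
      0 < s' j :=
  stmt_6_general n m p hsort D hD sstar hsum hopt i j hij hi hj
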